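/- arXiv:1209.2068 — 2 statements merged into one kernel-verified Lean document; each statement's English description precedes it below -/
import Mathlib

section
/- Let g₁, g₂, g₃ be commuting finite-order automorphisms of a finite-dimensional complex vector space V with g₁g₂g₃ = 1. Then L(g₁)(V) + L(g₂)(V) + L(g₃)(V) − dim V + dim V^{g₁,g₂} is a non-negative integer, where V^{g₁,g₂} is the common fixed subspace of g₁ and g₂. -/
/-- The logarithmic trace `L(g)(V)` of an automorphism `g` with `g ^ n = 1`:
the sum over `k < n` of `(k/n) · dim V_{k/n}`, where `V_{k/n}` is the eigenspace
of `g` for the eigenvalue `exp(2πi·k/n)`. -/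
noncomputable def logTrace {V : Type} [AddCommGroup V] [Module ℂ V]
    (n : ℕ) (g : V →ₗ[ℂ] V) : ℚ :=
  ∑ k ∈ Finset.range n, (k : ℚ) / (n : ℚ) *
    (Module.finrank ℂ
      (Module.End.eigenspace g (Complex.exp (2 * (Real.pi : ℂ) * Complex.I * ((k : ℂ) / (n : ℂ))))) : ℚ)

/-!
The commuting finite-order automorphisms `g₁, g₂` are simultaneously diagonalisable, so `V` is the
direct sum of joint eigenspaces `W(a, b)` on which `g₁, g₂, g₃` act by `ζ ^ a, ζ ^ b, ζ ^ c`, where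
`ζ = exp(2πi/n)`, `0 ≤ a, b, c < n` and `a + b + c ≡ 0 mod n` because `g₃ = (g₁g₂)⁻¹`. Each term
of the expression is additive over this decomposition, and on `W(a, b)` the expression is
`((a + b + c)/n - 1 + [a = b = 0]) · dim W(a, b)`. As `(a + b + c)/n ∈ {0, 1, 2}` vanishes only
for `a = b = 0` and equals `2` exactly when `a + b > n`, the total is `∑_{a + b > n} dim W(a, b)`.
-/

open Module Module.End Finset Polynomial

theorem iSupIndep.inf_prod {α ι : Type*} [CompleteLattice α] [IsModularLattice α]
    [IsCompactlyGenerated α] {A B : ι → α} (hA : iSupIndep A) (hB : iSupIndep B) :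
    iSupIndep fun p : ι × ι => A p.1 ⊓ B p.2 := by
  have h := (iSupIndep.iInf (fun b : Bool => cond b A B) (by simp [hA, hB])).comp
    (f := fun p : ι × ι => fun b : Bool => cond b p.1 p.2)
    (fun p q hpq => Prod.ext (congrFun hpq true) (congrFun hpq false))
  simpa [Function.comp_def, iInf_bool_eq] using h

theorem iSupIndep.finrank_biSup_eq_sum {K V ι : Type*} [Field K] [AddCommGroup V] [Module K V]
    [FiniteDimensional K V] {p : ι → Submodule K V} (h : iSupIndep p) (s : Finset ι) :
    finrank K ↥(⨆ i ∈ s, p i) = ∑ i ∈ s, finrank K ↥(p i) := by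
  classical
  induction s using Finset.induction_on with
  | empty => simp
  | @insert a s ha ih =>
    have hdisj : Disjoint (p a) (⨆ i ∈ s, p i) := by
      simpa using h.disjoint_biSup (y := (↑s : Set ι)) (by simpa using ha)
    have key := Submodule.finrank_sup_add_finrank_inf_eq (p a) (⨆ i ∈ s, p i)
    rw [hdisj.eq_bot, finrank_bot] at key
    rw [Finset.iSup_insert, sum_insert ha, ← ih]
    omega

theorem iSupIndep.finrank_eq_sum {K V ι : Type*} [Field K] [AddCommGroup V] [Module K V]
    [FiniteDimensional K V] [Fintype ι] {W : ι → Submodule K V} (hW : iSupIndep W)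
    (hW_top : ⨆ i, W i = ⊤) : finrank K V = ∑ i, finrank K (W i) := by
  rw [← hW.finrank_biSup_eq_sum, show ⨆ i ∈ univ, W i = ⊤ by simpa using hW_top, finrank_top]

theorem iSupIndep.finrank_eq_sum_fiber {K V ι α : Type*} [Field K] [AddCommGroup V] [Module K V]
    [FiniteDimensional K V] [Fintype ι] [Fintype α] [DecidableEq α]
    {W : ι → Submodule K V} {E : α → Submodule K V} (hW : iSupIndep W) (hW_top : ⨆ i, W i = ⊤)
    (hE : iSupIndep E) (κ : ι → α) (hκ : ∀ i, W i ≤ E (κ i)) (a : α) :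
    finrank K (E a) = ∑ i ∈ univ.filter (κ · = a), finrank K (W i) := by
  have hle : ∀ a, ∑ i ∈ univ.filter (κ · = a), finrank K (W i) ≤ finrank K (E a) := fun a => by
    rw [← hW.finrank_biSup_eq_sum]
    exact Submodule.finrank_mono (iSup₂_le fun i hi => (mem_filter.mp hi).2 ▸ hκ i)
  have htotal : ∑ a, finrank K (E a) ≤ ∑ a, ∑ i ∈ univ.filter (κ · = a), finrank K (W i) := by
    rw [sum_fiberwise univ κ (fun i => finrank K (W i)), ← hW.finrank_eq_sum hW_top,
      ← hE.finrank_biSup_eq_sum]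
    exact Submodule.finrank_le _
  exact ((sum_eq_sum_iff_of_le fun a _ => hle a).mp
    (le_antisymm (sum_le_sum fun a _ => hle a) htotal) a (mem_univ a)).symm

namespace Module.End

theorem eigenspace_inf_eigenspace_le_of_mul_eq_one {R M : Type*} [CommRing R] [AddCommGroup M]
    [Module R M] {f g h : End R M} (hfgh : h * (f * g) = 1) {μ ν ρ : R}
    (hρ : ρ * (μ * ν) = 1) : f.eigenspace μ ⊓ g.eigenspace ν ≤ h.eigenspace ρ := by
  rintro v ⟨hvf, hvg⟩
  rw [SetLike.mem_coe, mem_eigenspace_iff] at hvf hvg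
  rw [mem_eigenspace_iff]
  have hv : (f * g) (ρ • v) = v := by
    rw [map_smul, mul_apply, hvg, map_smul, hvf, smul_smul, smul_smul, mul_assoc, mul_comm ν, hρ,
      one_smul]
  calc h v = (h * (f * g)) (ρ • v) := by rw [mul_apply, hv]
    _ = ρ • v := by rw [hfgh, one_apply]

variable {K V : Type*} [Field K] [AddCommGroup V] [Module K V] {n : ℕ}

theorem eigenspace_eq_bot_or_exists_eq_pow [NeZero n] {ζ : K} (hζ : IsPrimitiveRoot ζ n)
    {f : End K V} (hf : f ^ n = 1) (μ : K) :
    f.eigenspace μ = ⊥ ∨ ∃ a : Fin n, μ = ζ ^ (a : ℕ) := by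
  refine or_iff_not_imp_left.mpr fun hμ => ?_
  obtain ⟨v, hv⟩ := HasEigenvalue.exists_hasEigenvector hμ
  have hμn : μ ^ n • v = (1 : K) • v := by rw [← hv.pow_apply, hf, one_smul, one_apply]
  obtain ⟨a, ha, rfl⟩ := hζ.eq_pow_of_pow_eq_one (smul_left_injective K hv.2 hμn)
  exact ⟨⟨a, ha⟩, rfl⟩

theorem iSupIndep_eigenspace_pow {ζ : K} (hζ : IsPrimitiveRoot ζ n) (f : End K V) :
    iSupIndep fun a : Fin n => f.eigenspace (ζ ^ (a : ℕ)) :=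
  f.eigenspaces_iSupIndep.comp fun a b hab => Fin.ext (hζ.pow_inj a.2 b.2 hab)

theorem isSemisimple_of_pow_eq_one {f : End K V} (hf : f ^ n = 1) (hn : (n : K) ≠ 0) :
    f.IsSemisimple :=
  isSemisimple_of_squarefree_aeval_eq_zero (separable_X_pow_sub_C 1 hn one_ne_zero).squarefree
    (by simp [hf])

variable [IsAlgClosed K] [FiniteDimensional K V] [NeZero n] {ζ : K}

theorem iSup_eigenspace_pow_eq_top (hζ : IsPrimitiveRoot ζ n) {f : End K V} (hf : f ^ n = 1) :
    ⨆ a : Fin n, f.eigenspace (ζ ^ (a : ℕ)) = ⊤ := by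
  refine eq_top_iff.mpr ((isSemisimple_of_pow_eq_one hf hζ.neZero'.out).iSup_eigenspace_eq_top
    ▸ iSup_le fun μ => ?_)
  rcases eigenspace_eq_bot_or_exists_eq_pow hζ hf μ with h | ⟨a, rfl⟩
  · exact h ▸ bot_le
  · exact le_iSup_of_le a le_rfl

theorem iSup_inf_eigenspace_pow_eq_top (hζ : IsPrimitiveRoot ζ n) {f g : End K V}
    (hf : f ^ n = 1) (hg : g ^ n = 1) (hfg : Commute f g) :
    ⨆ p : Fin n × Fin n, f.eigenspace (ζ ^ (p.1 : ℕ)) ⊓ g.eigenspace (ζ ^ (p.2 : ℕ)) = ⊤ := by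
  refine eq_top_iff.mpr (iSup_eigenspace_pow_eq_top hζ hf ▸ iSup_le fun a => ?_)
  refine (Submodule.eq_iSup_inf_genEigenspace (p := f.eigenspace (ζ ^ (a : ℕ))) 1
    (fun x hx => mapsTo_genEigenspace_of_comm hfg _ 1 hx)
    (isSemisimple_of_pow_eq_one hg hζ.neZero'.out).iSup_eigenspace_eq_top).le.trans
    (iSup_le fun μ => ?_)
  rcases eigenspace_eq_bot_or_exists_eq_pow hζ hg μ with h | ⟨b, rfl⟩
  · simp [show g.genEigenspace μ 1 = ⊥ from h]
  · exact le_iSup_of_le (a, b) le_rfl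

end Module.End

theorem Fin.val_add_val_add_val_neg_add {n : ℕ} [NeZero n] (a b : Fin n) :
    (a : ℕ) + b + ((-(a + b) : Fin n) : ℕ) =
      n * if (a : ℕ) + b = 0 then 0 else if (a : ℕ) + b ≤ n then 1 else 2 := by
  have ha := a.2
  have hb := b.2
  rw [Fin.val_neg', Fin.val_add]
  rcases Nat.lt_or_ge ((a : ℕ) + b) n with hlt | hge
  · rw [Nat.mod_eq_of_lt hlt]
    rcases Nat.eq_zero_or_pos ((a : ℕ) + b) with h0 | hpos
    · simp [h0]
    · rw [Nat.mod_eq_of_lt (by omega : n - ((a : ℕ) + b) < n)]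
      split_ifs <;> omega
  · rw [Nat.mod_eq_sub_mod hge, Nat.mod_eq_of_lt (by omega : (a : ℕ) + b - n < n)]
    rcases Nat.eq_or_lt_of_le hge with heq | hgt
    · simp [← heq]
    · rw [Nat.mod_eq_of_lt (by omega : n - ((a : ℕ) + b - n) < n)]
      split_ifs <;> omega

theorem Fin.val_div_add_val_div_add_val_neg_add_div {n : ℕ} [NeZero n] (a b : Fin n) :
    ((a : ℕ) / n + (b : ℕ) / n + ((-(a + b) : Fin n) : ℕ) / n : ℚ) - 1 +
      (if (a, b) = 0 then 1 else 0) = if n < (a : ℕ) + b then 1 else 0 := by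
  have hn : (n : ℚ) ≠ 0 := Nat.cast_ne_zero.mpr (NeZero.ne n)
  have hsum : ((a : ℕ) / n + (b : ℕ) / n + ((-(a + b) : Fin n) : ℕ) / n : ℚ) =
      if (a : ℕ) + b = 0 then 0 else if (a : ℕ) + b ≤ n then 1 else 2 := by
    rw [← add_div, ← add_div, div_eq_iff hn]
    exact_mod_cast (Fin.val_add_val_add_val_neg_add a b).trans (by split_ifs <;> ring)
  have hzero : (a, b) = 0 ↔ (a : ℕ) + b = 0 := by
    rw [Prod.mk_eq_zero, Fin.ext_iff, Fin.ext_iff, Fin.val_zero]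
    omega
  rw [hsum, if_congr hzero rfl rfl]
  split_ifs <;> first | omega | norm_num

theorem logTrace_eq_sum_fin {V : Type} [AddCommGroup V] [Module ℂ V] (n : ℕ) (f : End ℂ V) :
    logTrace n f = ∑ a : Fin n, ((a : ℕ) : ℚ) / n *
      finrank ℂ (f.eigenspace (Complex.exp (2 * Real.pi * Complex.I / n) ^ (a : ℕ))) := by
  rw [logTrace, ← Fin.sum_univ_eq_sum_range]
  refine sum_congr rfl fun a _ => ?_
  rw [← Complex.exp_nat_mul, mul_div_assoc', mul_comm _ ((a : ℕ) : ℂ), mul_div_assoc]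

theorem logTrace_eq_sum_of_le {V : Type} [AddCommGroup V] [Module ℂ V] [FiniteDimensional ℂ V]
    {n : ℕ} [NeZero n] {ι : Type*} [Fintype ι] {W : ι → Submodule ℂ V} (hW : iSupIndep W)
    (hW_top : ⨆ i, W i = ⊤) (f : End ℂ V) (κ : ι → Fin n)
    (hκ : ∀ i, W i ≤ f.eigenspace (Complex.exp (2 * Real.pi * Complex.I / n) ^ (κ i : ℕ))) :
    logTrace n f = ∑ i, ((κ i : ℕ) : ℚ) / n * finrank ℂ (W i) := by
  have hζ := Complex.isPrimitiveRoot_exp n (NeZero.ne n)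
  rw [logTrace_eq_sum_fin, ← sum_fiberwise univ κ]
  refine sum_congr rfl fun a _ => ?_
  rw [hW.finrank_eq_sum_fiber hW_top (iSupIndep_eigenspace_pow hζ f) κ hκ, Nat.cast_sum, mul_sum]
  exact sum_congr rfl fun i hi => by rw [(mem_filter.mp hi).2]

theorem sum_weighted_exponents_eq {n : ℕ} [NeZero n] (d : Fin n × Fin n → ℚ) :
    ∑ p, ((p.1 : ℕ) : ℚ) / n * d p + ∑ p, ((p.2 : ℕ) : ℚ) / n * d p
      + ∑ p, (((-(p.1 + p.2) : Fin n) : ℕ) : ℚ) / n * d p - ∑ p, d p + d 0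
      = ∑ p ∈ univ.filter (fun p : Fin n × Fin n => n < (p.1 : ℕ) + p.2), d p := by
  rw [← Fintype.sum_ite_eq' (0 : Fin n × Fin n) d, sum_filter, ← sum_add_distrib,
    ← sum_add_distrib, ← sum_sub_distrib, ← sum_add_distrib]
  refine sum_congr rfl fun ⟨a, b⟩ _ => ?_
  calc _ = ((((a : ℕ) : ℚ) / n + ((b : ℕ) : ℚ) / n + (((-(a + b) : Fin n) : ℕ) : ℚ) / n)
          - 1 + (if (a, b) = 0 then 1 else 0)) * d (a, b) := by
        split_ifs <;> ring
    _ = _ := by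
        rw [Fin.val_div_add_val_div_add_val_neg_add_div]
        split_ifs <;> ring

theorem logTrace_triple_nonneg_integer_general {V : Type} [AddCommGroup V] [Module ℂ V]
    [FiniteDimensional ℂ V] (g₁ g₂ g₃ : V ≃ₗ[ℂ] V) (n : ℕ) (hn : 0 < n)
    (h₁ : g₁ ^ n = 1) (h₂ : g₂ ^ n = 1)
    (hc₁₂ : g₁ * g₂ = g₂ * g₁)
    (hprod : g₁ * g₂ * g₃ = 1) :
    ∃ m : ℕ,
      logTrace n (g₁ : V →ₗ[ℂ] V) + logTrace n (g₂ : V →ₗ[ℂ] V)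
        + logTrace n (g₃ : V →ₗ[ℂ] V)
        - (Module.finrank ℂ V : ℚ)
        + (Module.finrank ℂ
            ((Module.End.eigenspace (g₁ : V →ₗ[ℂ] V) 1 ⊓
              Module.End.eigenspace (g₂ : V →ₗ[ℂ] V) 1 : Submodule ℂ V)) : ℚ) = m := by
  have : NeZero n := ⟨hn.ne'⟩
  set ζ := Complex.exp (2 * Real.pi * Complex.I / n)
  have hζ : IsPrimitiveRoot ζ n := Complex.isPrimitiveRoot_exp n hn.ne'
  have toEnd_pow {g : V ≃ₗ[ℂ] V} (hg : g ^ n = 1) : (g : End ℂ V) ^ n = 1 := by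
    rw [← LinearEquiv.automorphismGroup.toLinearMapMonoidHom_apply, ← map_pow, hg, map_one]
  let W : Fin n × Fin n → Submodule ℂ V := fun p =>
    eigenspace (g₁ : End ℂ V) (ζ ^ (p.1 : ℕ)) ⊓ eigenspace (g₂ : End ℂ V) (ζ ^ (p.2 : ℕ))
  have hW : iSupIndep W := (iSupIndep_eigenspace_pow hζ _).inf_prod (iSupIndep_eigenspace_pow hζ _)
  have hW_top : ⨆ p, W p = ⊤ := iSup_inf_eigenspace_pow_eq_top hζ (toEnd_pow h₁) (toEnd_pow h₂)
    (congrArg LinearEquiv.toLinearMap hc₁₂)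
  have hW₃ (p : Fin n × Fin n) :
      W p ≤ eigenspace (g₃ : End ℂ V) (ζ ^ ((-(p.1 + p.2) : Fin n) : ℕ)) := by
    refine eigenspace_inf_eigenspace_le_of_mul_eq_one
      (congrArg LinearEquiv.toLinearMap (mul_eq_one_comm.mp hprod)) ?_
    rw [← pow_add, ← pow_add, hζ.pow_eq_one_iff_dvd]
    exact ⟨_, by rw [← Fin.val_add_val_add_val_neg_add p.1 p.2]; ring⟩
  have hfix : eigenspace (g₁ : End ℂ V) 1 ⊓ eigenspace (g₂ : End ℂ V) 1 = W 0 := by simp [W]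
  rw [logTrace_eq_sum_of_le hW hW_top _ Prod.fst fun _ => inf_le_left,
    logTrace_eq_sum_of_le hW hW_top _ Prod.snd fun _ => inf_le_right,
    logTrace_eq_sum_of_le hW hW_top _ _ hW₃, hW.finrank_eq_sum hW_top, hfix]
  refine ⟨∑ p ∈ univ.filter (fun p : Fin n × Fin n => n < (p.1 : ℕ) + p.2), finrank ℂ (W p), ?_⟩
  push_cast
  exact sum_weighted_exponents_eq _

/-- For commuting finite-order automorphisms `g₁ g₂ g₃` with `g₁g₂g₃ = 1`,
`L(g₁)(V) + L(g₂)(V) + L(g₃)(V) − dim V + dim V^{g₁,g₂}` is a non-negative integer. -/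
theorem logTrace_triple_nonneg_integer {V : Type} [AddCommGroup V] [Module ℂ V]
    [FiniteDimensional ℂ V] (g₁ g₂ g₃ : V ≃ₗ[ℂ] V) (n : ℕ) (hn : 0 < n)
    (h₁ : g₁ ^ n = 1) (h₂ : g₂ ^ n = 1) (h₃ : g₃ ^ n = 1)
    (hc₁₂ : g₁ * g₂ = g₂ * g₁) (hc₁₃ : g₁ * g₃ = g₃ * g₁) (hc₂₃ : g₂ * g₃ = g₃ * g₂)
    (hprod : g₁ * g₂ * g₃ = 1) :
    ∃ m : ℕ,
      logTrace n (g₁ : V →ₗ[ℂ] V) + logTrace n (g₂ : V →ₗ[ℂ] V)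
        + logTrace n (g₃ : V →ₗ[ℂ] V)
        - (Module.finrank ℂ V : ℚ)
        + (Module.finrank ℂ
            ((Module.End.eigenspace (g₁ : V →ₗ[ℂ] V) 1 ⊓
              Module.End.eigenspace (g₂ : V →ₗ[ℂ] V) 1 : Submodule ℂ V)) : ℚ) = m :=
  logTrace_triple_nonneg_integer_general g₁ g₂ g₃ n hn h₁ h₂ hc₁₂ hprod
end

section
/- In the ring R = ℤ[χ]/⟨(χ³−1)²⟩, the class e(χ) := 1 − χ⁻¹ (equivalently 1 − χ⁵, since χ⁶ = 2χ³ − 1 makes χ invertible with χ⁻¹ = 2χ² − χ⁵) satisfies: the inertial K-theory product table of P(1,3,3) for the virtual product, given by 1_ω ⋆ 1_ω = e(χ)·1_{ω⁻¹}, 1_ω ⋆ 1_{ω⁻¹} = e(χ)²·1_1, 1_{ω⁻¹} ⋆ 1_{ω⁻¹} = e(χ)·1_ω, together with 1_1 acting as identity, defines an associative commutative ring structure on the free module R·1_1 ⊕ R·1_ω ⊕ R·1_{ω⁻¹} modulo the relation identifying the 1_1-component with ℤ[χ]/⟨(χ−1)(χ³−1)²⟩. -/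
open Polynomial

/-- `A = ℤ[χ]/⟨(χ−1)(χ³−1)²⟩`, the K-theory of the untwisted sector of `P(1,3,3)`. -/
noncomputable abbrev KA : Type :=
  Polynomial ℤ ⧸ Ideal.span ({(Polynomial.X - 1) * (Polynomial.X ^ 3 - 1) ^ 2} : Set (Polynomial ℤ))

/-- `B = ℤ[χ]/⟨(χ³−1)²⟩`, the K-theory of each twisted sector of `P(1,3,3)`. -/
noncomputable abbrev KB : Type :=
  Polynomial ℤ ⧸ Ideal.span ({(Polynomial.X ^ 3 - 1) ^ 2} : Set (Polynomial ℤ))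

noncomputable def mkA : Polynomial ℤ →+* KA := Ideal.Quotient.mk _
noncomputable def mkB : Polynomial ℤ →+* KB := Ideal.Quotient.mk _

/-- The module `K(I P(1,3,3)) = A·1₁ ⊕ B·1_ω ⊕ B·1_{ω⁻¹}`. -/
noncomputable abbrev KM : Type := KA × KB × KB

/-- The virtual inertial product on `K(I P(1,3,3))`, extended from the table
`1_ω ⋆ 1_ω = e(χ)·1_{ω⁻¹}`, `1_ω ⋆ 1_{ω⁻¹} = e(χ)²·1₁`,
`1_{ω⁻¹} ⋆ 1_{ω⁻¹} = e(χ)·1_ω` by the projection formula, where `π : A → B` is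
the restriction map, `j : B → A` is the pushforward (multiplication by `e(χ)`),
and `e : B` is the Euler class `e(χ)`. -/
noncomputable def kmul (π : KA →+* KB) (j : KB →ₗ[ℤ] KA) (e : KB) (x y : KM) : KM :=
  (x.1 * y.1 + j (e * (x.2.1 * y.2.2 + x.2.2 * y.2.1)),
   π x.1 * y.2.1 + x.2.1 * π y.1 + e * (x.2.2 * y.2.2),
   π x.1 * y.2.2 + x.2.2 * π y.1 + e * (x.2.1 * y.2.1))

/-!
For any ring map `π : A → B`, additive `j : B → A` and `e : B`, the product `kmul π j e` is
commutative with unit `1₁`; it is associative once `j` satisfies the projection formula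
`j (π a * u) = a * j u` and `π (j u) = e * u`. For `P(1,3,3)`, `π` is the quotient map and `j` is
multiplication by `1 - χ⁻¹`, so both hold, the second because `π` carries `χ⁻¹ ∈ A` to the
inverse of `χ` in `B`.
-/

section VirtualProduct

variable {π : KA →+* KB} {j : KB →ₗ[ℤ] KA} {e : KB}

theorem kmul_comm (x y : KM) : kmul π j e x y = kmul π j e y x := by
  simp only [kmul, Prod.mk.injEq]
  refine ⟨?_, by ring, by ring⟩
  rw [mul_comm x.1, add_comm (x.2.1 * y.2.2), mul_comm x.2.1, mul_comm x.2.2]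

theorem untwisted_one_kmul (x : KM) : kmul π j e (1, 0, 0) x = x := by
  simp [kmul]

theorem kmul_assoc (hj : ∀ a u, j (π a * u) = a * j u) (hπj : ∀ u, π (j u) = e * u)
    (x y z : KM) : kmul π j e (kmul π j e x y) z = kmul π j e x (kmul π j e y z) := by
  obtain ⟨a₁, b₁, c₁⟩ := x
  obtain ⟨a₂, b₂, c₂⟩ := y
  obtain ⟨a₃, b₃, c₃⟩ := z
  simp only [kmul, Prod.mk.injEq, map_add, map_mul, hπj]
  refine ⟨?_, by ring, by ring⟩
  have hj' : ∀ a u, j u * a = j (π a * u) := fun a u => by rw [hj, mul_comm]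
  rw [add_mul _ _ a₃, mul_add a₁, hj', ← hj a₁, add_assoc (a₁ * a₂ * a₃),
    add_assoc (a₁ * (a₂ * a₃)), ← map_add j, ← map_add j]
  congr 1
  · ring
  · congr 1; ring

end VirtualProduct

namespace P133

theorem mkA_relation : (mkA X - 1) * (mkA X ^ 3 - 1) ^ 2 = 0 := by
  rw [← map_one mkA, ← map_sub, ← map_pow, ← map_sub, ← map_pow, ← map_mul]
  exact Ideal.Quotient.eq_zero_iff_mem.2 (Ideal.subset_span rfl)

theorem mkB_relation : (mkB X ^ 3 - 1) ^ 2 = 0 := by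
  rw [← map_one mkB, ← map_pow, ← map_sub, ← map_pow]
  exact Ideal.Quotient.eq_zero_iff_mem.2 (Ideal.subset_span rfl)

noncomputable def invB : KB := mkB (2 * X ^ 2 - X ^ 5)

theorem mkB_X_mul_invB : mkB X * invB = 1 := by
  simp only [invB, map_sub, map_mul, map_pow, map_ofNat]
  linear_combination -mkB_relation

/-- Read off from `(χ - 1)(χ³ - 1)² = χ (χ⁶ - χ⁵ - 2χ³ + 2χ² + 1) - 1`. -/
noncomputable def invA : KA := mkA (X ^ 6 - X ^ 5 - 2 * X ^ 3 + 2 * X ^ 2 + 1)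

theorem mkA_X_mul_invA : mkA X * invA = 1 := by
  simp only [invA, map_add, map_sub, map_mul, map_pow, map_ofNat, map_one]
  linear_combination mkA_relation

noncomputable def restrict : KA →+* KB :=
  Ideal.Quotient.factor (Ideal.span_singleton_le_span_singleton.2 (dvd_mul_left _ _))

theorem restrict_mkA (p : Polynomial ℤ) : restrict (mkA p) = mkB p := rfl

theorem restrict_invA : restrict invA = invB := by
  refine left_inv_eq_right_inv ?_ mkB_X_mul_invB
  have h := congrArg restrict mkA_X_mul_invA
  rwa [map_mul, map_one, restrict_mkA, mul_comm] at h

theorem mkA_cube_sub_one_sq_mul_one_sub_invA : mkA ((X ^ 3 - 1) ^ 2) * (1 - invA) = 0 := by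
  rw [map_pow, map_sub, map_pow, map_one]
  linear_combination invA * mkA_relation - (mkA X ^ 3 - 1) ^ 2 * mkA_X_mul_invA

/-- Multiplication by `1 - χ⁻¹` descends from `ℤ[χ]` to `B → A` because
`(χ³ - 1)² (1 - χ⁻¹) = χ⁻¹ (χ - 1)(χ³ - 1)²` vanishes in `A`. -/
noncomputable def pushforward : KB →ₗ[ℤ] KA :=
  (Submodule.liftQ _ (LinearMap.toSpanSingleton (Polynomial ℤ) KA (1 - invA)) (by
    rw [Ideal.span, Submodule.span_le, Set.singleton_subset_iff]
    exact (Algebra.smul_def _ _).trans mkA_cube_sub_one_sq_mul_one_sub_invA)).restrictScalars ℤ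

theorem pushforward_mkB (p : Polynomial ℤ) : pushforward (mkB p) = mkA p * (1 - invA) :=
  Algebra.smul_def (A := KA) p (1 - invA)

theorem pushforward_restrict_mul (a : KA) (u : KB) :
    pushforward (restrict a * u) = a * pushforward u := by
  obtain ⟨p, rfl⟩ := Ideal.Quotient.mk_surjective a
  obtain ⟨q, rfl⟩ := Ideal.Quotient.mk_surjective u
  change pushforward (restrict (mkA p) * mkB q) = mkA p * pushforward (mkB q)
  rw [restrict_mkA, ← map_mul, pushforward_mkB, pushforward_mkB, map_mul, mul_assoc]

theorem restrict_pushforward (u : KB) : restrict (pushforward u) = (1 - invB) * u := by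
  obtain ⟨q, rfl⟩ := Ideal.Quotient.mk_surjective u
  change restrict (pushforward (mkB q)) = (1 - invB) * mkB q
  rw [pushforward_mkB, map_mul, map_sub, map_one, restrict_invA, restrict_mkA, mul_comm]

end P133

/-- The virtual K-theory product table of `P(1,3,3)` defines an associative,
commutative ring structure with identity `1₁` on `A·1₁ ⊕ B·1_ω ⊕ B·1_{ω⁻¹}`:
here `χ` is invertible with `χ⁻¹ = 2χ² − χ⁵` in `B` (since `χ⁶ = 2χ³ − 1`),
`e(χ) = 1 − χ⁻¹`, `π : A → B` is the natural quotient map, and `j : B → A` is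
the pushforward, characterized by `j(p) = p·(1 − χ⁻¹)` in `A`. -/
theorem virtual_product_P133_ring :
    letI χinvB : KB := mkB (2 * Polynomial.X ^ 2 - Polynomial.X ^ 5)
    letI e : KB := 1 - χinvB
    (mkB Polynomial.X * χinvB = 1) ∧
    ∃ (π : KA →+* KB) (j : KB →ₗ[ℤ] KA) (χinvA : KA),
      (∀ p : Polynomial ℤ, π (mkA p) = mkB p) ∧
      (mkA Polynomial.X * χinvA = 1) ∧
      (∀ p : Polynomial ℤ, j (mkB p) = mkA p * (1 - χinvA)) ∧
      (∀ x y : KM, kmul π j e x y = kmul π j e y x) ∧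
      (∀ x y z : KM, kmul π j e (kmul π j e x y) z = kmul π j e x (kmul π j e y z)) ∧
      (∀ x : KM, kmul π j e ((1 : KA), (0 : KB), (0 : KB)) x = x) := by
  exact ⟨P133.mkB_X_mul_invB, P133.restrict, P133.pushforward, P133.invA, P133.restrict_mkA,
    P133.mkA_X_mul_invA, P133.pushforward_mkB, kmul_comm,
    kmul_assoc P133.pushforward_restrict_mul P133.restrict_pushforward, untwisted_one_kmul⟩
end
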